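/- Let L > 0 and let n ≥ 256L² be an integer. Let z = u + iv with u real and v ∈ (0,1), let G_Φ(z) = (z − √(z²−4))/2 and G₂(z) = (z + √(z²−4))/2 (the two roots of G² − zG + 1 = 0, with the branch of √(z²−4) on the upper half-plane satisfying √(z²−4) ∼ z as z → ∞). Suppose φ is holomorphic on the closed disc {|w| ≤ 2} and |φ(w)| ≤ 128 L³/√n for all |w| ≤ 2. Then for every complex G with |G − G_Φ(z)| = √v, | G·φ(G) / (G₂(z) − G) | ≤ (512 L³/√n) · ((u²−4)² + 2u²v²)^{−1/4}. -/

import Mathlib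

open MeasureTheory Complex Set

/-- The Cauchy transform of a measure on ℝ: `G_μ(z) = ∫ dμ(t)/(z−t)`. -/
noncomputable def cauchyT (μ : Measure ℝ) (z : ℂ) : ℂ := ∫ t : ℝ, (z - (t : ℂ))⁻¹ ∂μ

/-- The cumulative distribution function of a measure on ℝ. -/
noncomputable def cdfOf (μ : Measure ℝ) (x : ℝ) : ℝ := (μ (Set.Iic x)).toReal

/-- The cumulative distribution function of the standard semicircle law. -/
noncomputable def semicircleCDF (x : ℝ) : ℝ :=
  (1 / Real.pi) * ∫ t in Set.Iic x,
    Set.indicator (Set.Icc (-2 : ℝ) 2) (fun s => Real.sqrt (4 - s ^ 2)) t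

/-- The branch of `√(z²−4)` holomorphic on the upper half-plane with `√(z²−4) ∼ z`
as `z → ∞`, given by `√(z−2)·√(z+2)` with principal square roots. -/
noncomputable def sqrtBr (z : ℂ) : ℂ := (z - 2) ^ ((1 : ℂ) / 2) * (z + 2) ^ ((1 : ℂ) / 2)

/-- The Cauchy transform of the semicircle law: `G_Φ(z) = (z − √(z²−4))/2`. -/
noncomputable def Gsc (z : ℂ) : ℂ := (z - sqrtBr z) / 2

/-- The other root of `G² − zG + 1 = 0`: `G₂(z) = (z + √(z²−4))/2`. -/
noncomputable def Gsc2 (z : ℂ) : ℂ := (z + sqrtBr z) / 2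

/-!
Writing `a = √(z-2)` and `b = √(z+2)` (principal roots), `G_Φ = ((a-b)/2)²` and
`G₂ = ((a+b)/2)²` with `G_Φ G₂ = 1`; for `Im z ≥ 0` both `a` and `b` lie in the closed first
quadrant, so `|a - b| ≤ |a + b|` and hence `|G_Φ| ≤ 1`. On the circle this gives `|G| ≤ 2`, so the
numerator is at most `2 sup |φ|`. For the denominator, `G₂ - G = √(z²-4) - (G - G_Φ)`, and the
quartic identity for `|√(z²-4)|` together with `(x/2 + y)⁴ ≤ x⁴ + 8y⁴` gives
`|√(z²-4)| ≥ ((u²-4)² + 2u²v²)^{1/4}/2 + √v`.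
-/

lemma cpow_one_div_two_sq (w : ℂ) : (w ^ ((1 : ℂ) / 2)) ^ 2 = w := by
  simp [one_div]

lemma re_cpow_one_div_two_nonneg (w : ℂ) : 0 ≤ (w ^ ((1 : ℂ) / 2)).re := by
  rw [one_div, cpow_inv_two_re]
  exact Real.sqrt_nonneg _

lemma im_cpow_one_div_two_nonneg {w : ℂ} (hw : 0 ≤ w.im) : 0 ≤ (w ^ ((1 : ℂ) / 2)).im := by
  rw [one_div, cpow_inv_two_im_eq_sqrt hw]
  exact Real.sqrt_nonneg _

lemma norm_sub_le_norm_add_of_nonneg {a b : ℂ} (ha : 0 ≤ a.re) (ha' : 0 ≤ a.im)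
    (hb : 0 ≤ b.re) (hb' : 0 ≤ b.im) : ‖a - b‖ ≤ ‖a + b‖ := by
  have hre : 0 ≤ (a * (starRingEnd ℂ) b).re := by
    simp only [mul_re, conj_re, conj_im]
    nlinarith [mul_nonneg ha hb, mul_nonneg ha' hb']
  rw [norm_def, norm_def, normSq_sub, normSq_add]
  gcongr
  linarith

lemma sqrtBr_sq (z : ℂ) : sqrtBr z ^ 2 = z ^ 2 - 4 := by
  rw [sqrtBr, mul_pow, cpow_one_div_two_sq, cpow_one_div_two_sq]
  ring

lemma Gsc_mul_Gsc2 (z : ℂ) : Gsc z * Gsc2 z = 1 := by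
  rw [Gsc, Gsc2]
  linear_combination -sqrtBr_sq z / 4

lemma Gsc_eq_sq (z : ℂ) :
    Gsc z = (((z - 2) ^ ((1 : ℂ) / 2) - (z + 2) ^ ((1 : ℂ) / 2)) / 2) ^ 2 := by
  rw [Gsc, sqrtBr]
  linear_combination (-cpow_one_div_two_sq (z - 2) - cpow_one_div_two_sq (z + 2)) / 4

lemma Gsc2_eq_sq (z : ℂ) :
    Gsc2 z = (((z - 2) ^ ((1 : ℂ) / 2) + (z + 2) ^ ((1 : ℂ) / 2)) / 2) ^ 2 := by
  rw [Gsc2, sqrtBr]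
  linear_combination (-cpow_one_div_two_sq (z - 2) - cpow_one_div_two_sq (z + 2)) / 4

lemma norm_Gsc_le_norm_Gsc2 {z : ℂ} (hz : 0 ≤ z.im) : ‖Gsc z‖ ≤ ‖Gsc2 z‖ := by
  have him₁ : 0 ≤ (z - 2).im := by simpa using hz
  have him₂ : 0 ≤ (z + 2).im := by simpa using hz
  rw [Gsc_eq_sq, Gsc2_eq_sq, norm_pow, norm_pow, norm_div, norm_div]
  gcongr
  exact norm_sub_le_norm_add_of_nonneg (re_cpow_one_div_two_nonneg _)
    (im_cpow_one_div_two_nonneg him₁) (re_cpow_one_div_two_nonneg _)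
    (im_cpow_one_div_two_nonneg him₂)

lemma norm_Gsc_le_one {z : ℂ} (hz : 0 ≤ z.im) : ‖Gsc z‖ ≤ 1 := by
  have h := norm_Gsc_le_norm_Gsc2 hz
  have hmul : ‖Gsc z‖ * ‖Gsc2 z‖ = 1 := by rw [← norm_mul, Gsc_mul_Gsc2, norm_one]
  nlinarith [norm_nonneg (Gsc z)]

lemma norm_sqrtBr_pow_four (u v : ℝ) :
    ‖sqrtBr (u + v * I)‖ ^ 4 = (u ^ 2 - 4) ^ 2 + 2 * (u ^ 2 + 4) * v ^ 2 + v ^ 4 := by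
  rw [show (4 : ℕ) = 2 * 2 from rfl, pow_mul, ← norm_pow, sqrtBr_sq, Complex.sq_norm, normSq_apply]
  simp only [sub_re, sub_im, pow_two, mul_re, mul_im, add_re, add_im, ofReal_re, ofReal_im,
    I_re, I_im, re_ofNat, im_ofNat]
  ring

lemma half_add_pow_four_le (x y : ℝ) : (x / 2 + y) ^ 4 ≤ x ^ 4 + 8 * y ^ 4 := by
  nlinarith [sq_nonneg (x / 2 - y), sq_nonneg (x ^ 2 / 4 - y ^ 2), sq_nonneg (x / 2 + y),
    sq_nonneg (x ^ 2 / 4 + y ^ 2), sq_nonneg x, sq_nonneg y]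

lemma rpow_quarter_div_two_add_sqrt_le_norm_sqrtBr (u : ℝ) {v : ℝ} (hv : 0 ≤ v) :
    ((u ^ 2 - 4) ^ 2 + 2 * u ^ 2 * v ^ 2) ^ (1 / 4 : ℝ) / 2 + √v ≤ ‖sqrtBr (u + v * I)‖ := by
  set A := (u ^ 2 - 4) ^ 2 + 2 * u ^ 2 * v ^ 2
  have hA : 0 ≤ A := by positivity
  have hA4 : (A ^ (1 / 4 : ℝ)) ^ 4 = A := by
    rw [← Real.rpow_natCast, ← Real.rpow_mul hA]
    norm_num
  have hv4 : √v ^ 4 = v ^ 2 := by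
    rw [show (4 : ℕ) = 2 * 2 from rfl, pow_mul, Real.sq_sqrt hv]
  refine le_of_pow_le_pow_left₀ four_ne_zero (norm_nonneg _) ?_
  calc (A ^ (1 / 4 : ℝ) / 2 + √v) ^ 4 ≤ A + 8 * v ^ 2 := by
        simpa only [hA4, hv4] using half_add_pow_four_le (A ^ (1 / 4 : ℝ)) √v
    _ ≤ ‖sqrtBr (u + v * I)‖ ^ 4 := by
        rw [norm_sqrtBr_pow_four]
        nlinarith [pow_nonneg hv 4]

theorem Mk_bound_general (L : ℝ) (n : ℕ)
    (u v : ℝ) (hv : v ∈ Set.Ioo (0 : ℝ) 1) (φ : ℂ → ℂ)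
    (hφb : ∀ w : ℂ, ‖w‖ ≤ 2 → ‖φ w‖ ≤ 128 * L ^ 3 / Real.sqrt n)
    (G : ℂ) (hG : ‖G - Gsc ((u : ℂ) + (v : ℂ) * I)‖ = Real.sqrt v) :
    ‖G * φ G / (Gsc2 ((u : ℂ) + (v : ℂ) * I) - G)‖
      ≤ (512 * L ^ 3 / Real.sqrt n) *
          ((u ^ 2 - 4) ^ 2 + 2 * u ^ 2 * v ^ 2) ^ (-(1 / 4) : ℝ) := by
  set z : ℂ := (u : ℂ) + (v : ℂ) * I
  set M := 128 * L ^ 3 / Real.sqrt n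
  set A := (u ^ 2 - 4) ^ 2 + 2 * u ^ 2 * v ^ 2
  have hA : 0 < A := by
    rcases eq_or_ne u 0 with rfl | hu
    · norm_num [A]
    · have : 0 < 2 * u ^ 2 * v ^ 2 := by have := hv.1; positivity
      positivity
  have hG2 : ‖G‖ ≤ 2 := calc
    ‖G‖ ≤ ‖G - Gsc z‖ + ‖Gsc z‖ := norm_le_norm_sub_add G (Gsc z)
    _ ≤ 1 + 1 := by
      rw [hG]
      gcongr
      · exact Real.sqrt_le_one.mpr hv.2.le
      · exact norm_Gsc_le_one (by simpa [z] using hv.1.le)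
    _ = 2 := by norm_num
  have hnum : ‖G * φ G‖ ≤ 2 * M := by
    rw [norm_mul]
    exact mul_le_mul hG2 (hφb G hG2) (norm_nonneg _) zero_le_two
  have hden : A ^ (1 / 4 : ℝ) / 2 ≤ ‖Gsc2 z - G‖ := by
    have hsplit : Gsc2 z - G = sqrtBr z - (G - Gsc z) := by rw [Gsc, Gsc2]; ring
    have := rpow_quarter_div_two_add_sqrt_le_norm_sqrtBr u hv.1.le
    have := norm_sub_norm_le (sqrtBr z) (G - Gsc z)
    rw [hsplit]
    linarith
  calc ‖G * φ G / (Gsc2 z - G)‖ ≤ 2 * M / (A ^ (1 / 4 : ℝ) / 2) := by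
        rw [norm_div]
        have hM : 0 ≤ M := (norm_nonneg _).trans (hφb 0 (by simp))
        exact div_le_div₀ (by positivity) hnum (by positivity) hden
    _ = 512 * L ^ 3 / Real.sqrt n * A ^ (-(1 / 4) : ℝ) := by
        rw [Real.rpow_neg hA.le]
        ring

/-- Estimate of `|Gφ(G)/(G₂(z) − G)|` on the circle `|G − G_Φ(z)| = √v`, where `z = u + iv`,
`v ∈ (0,1)`, `n ≥ 256L²`, and `φ` is holomorphic on `|w| ≤ 2` with `|φ| ≤ 128L³/√n` there. -/
theorem Mk_bound (L : ℝ) (hL : 0 < L) (n : ℕ) (hn : 256 * L ^ 2 ≤ n)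
    (u v : ℝ) (hv : v ∈ Set.Ioo (0 : ℝ) 1) (φ : ℂ → ℂ)
    (hφhol : DifferentiableOn ℂ φ (Metric.closedBall 0 2))
    (hφb : ∀ w : ℂ, ‖w‖ ≤ 2 → ‖φ w‖ ≤ 128 * L ^ 3 / Real.sqrt n)
    (G : ℂ) (hG : ‖G - Gsc ((u : ℂ) + (v : ℂ) * I)‖ = Real.sqrt v) :
    ‖G * φ G / (Gsc2 ((u : ℂ) + (v : ℂ) * I) - G)‖
      ≤ (512 * L ^ 3 / Real.sqrt n) *
          ((u ^ 2 - 4) ^ 2 + 2 * u ^ 2 * v ^ 2) ^ (-(1 / 4) : ℝ) :=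
  Mk_bound_general L n u v hv φ hφb G hG
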